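/- arXiv:1809.00452 — 5 statements merged into one kernel-verified Lean document; each statement's English description precedes it below -/
import Mathlib

section
/- (Exact expansion of the Fock energy; core of Lemma 5.1.) Let V : ℂ^{n×n} → ℂ^{n×n} be ℂ-linear, self-adjoint with respect to the Frobenius inner product (⟨V(D₁), D₂⟩ = ⟨V(D₂), D₁⟩ for all D₁, D₂), and Hermitian-preserving (D* = D implies (V(D))* = V(D)). Define E_f(Y) := (1/4) Re⟨V(YY*), YY*⟩ for Y ∈ ℂ^{n×p}. Then for all X, U ∈ ℂ^{n×p}, with D := XU* + UX*, one has the exact identity E_f(X + U) = E_f(X) + Re⟨V(XX*)X, U⟩ + (1/2) Re⟨V(XX*)U + V(D)X, U⟩ + (1/2) Re⟨V(D)U, U⟩ + (1/4) Re⟨V(UU*), UU*⟩. -/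
open Matrix

/-- The Fock exchange energy `E_f(Y) = (1/4) Re⟨V(YY*), YY*⟩`. -/
noncomputable def fockEnergy {n p : ℕ}
    (V : Matrix (Fin n) (Fin n) ℂ →ₗ[ℂ] Matrix (Fin n) (Fin n) ℂ)
    (Y : Matrix (Fin n) (Fin p) ℂ) : ℝ :=
  (1 / 4) * (((V (Y * Yᴴ))ᴴ * (Y * Yᴴ)).trace).re

/-!
Writing `(X + U)(X + U)* = XX* + D + UU*`, expand the quadratic form `S ↦ ⟨V(S), S⟩`; the symmetry
of `V` merges each pair of mixed terms into twice one of them. Cyclicity of the trace moves the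
mixed terms onto `U`, `⟨M, UX*⟩ = ⟨MX, U⟩`, and since `V(XX*)` and `V(D)` are Hermitian,
`Re⟨M, XU*⟩ = Re⟨M, UX*⟩` for them, which gives `Re⟨M, D⟩ = 2 Re⟨MX, U⟩`.
-/

section StarRing

variable {m n R : Type*} [CommRing R] [StarRing R]

theorem Matrix.add_mul_conjTranspose_add [Fintype n] (X U : Matrix m n R) :
    (X + U) * (X + U)ᴴ = X * Xᴴ + (X * Uᴴ + U * Xᴴ) + U * Uᴴ := by
  rw [conjTranspose_add, Matrix.add_mul, Matrix.mul_add, Matrix.mul_add]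
  abel

theorem Matrix.isHermitian_mul_conjTranspose_add [Fintype n] (X U : Matrix m n R) :
    (X * Uᴴ + U * Xᴴ).IsHermitian := by
  have hXU : X * Uᴴ = (U * Xᴴ)ᴴ := by rw [conjTranspose_mul, conjTranspose_conjTranspose]
  rw [hXU, add_comm]
  exact isHermitian_add_transpose_self _

theorem Matrix.trace_conjTranspose_mul_mul_eq [Fintype m] [Fintype n] (M : Matrix m m R)
    (X U : Matrix m n R) : ((M * X)ᴴ * U).trace = (Mᴴ * (U * Xᴴ)).trace := by
  rw [conjTranspose_mul, Matrix.mul_assoc, trace_mul_comm, Matrix.mul_assoc]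

theorem Matrix.IsHermitian.trace_mul_conjTranspose [Fintype m] {M : Matrix m m R}
    (hM : M.IsHermitian) (A : Matrix m m R) : (M * Aᴴ).trace = star (M * A).trace := by
  rw [← trace_conjTranspose, conjTranspose_mul, hM.eq, trace_mul_comm]

variable [Fintype m] (V : Matrix m m R →ₗ[R] Matrix m m R)
  (hsym : ∀ A B : Matrix m m R, ((V A)ᴴ * B).trace = ((V B)ᴴ * A).trace)
include hsym

theorem trace_conjTranspose_map_add_mul_add (A B : Matrix m m R) :
    ((V (A + B))ᴴ * (A + B)).trace
      = ((V A)ᴴ * A).trace + 2 * ((V A)ᴴ * B).trace + ((V B)ᴴ * B).trace := by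
  rw [map_add, conjTranspose_add, Matrix.add_mul, Matrix.mul_add, Matrix.mul_add, trace_add,
    trace_add, trace_add, hsym B A]
  ring

theorem trace_conjTranspose_map_add_add_mul_add_add (A B C : Matrix m m R) :
    ((V (A + B + C))ᴴ * (A + B + C)).trace
      = ((V A)ᴴ * A).trace + ((V B)ᴴ * B).trace + ((V C)ᴴ * C).trace
        + 2 * (((V A)ᴴ * B).trace + ((V A)ᴴ * C).trace + ((V B)ᴴ * C).trace) := by
  rw [trace_conjTranspose_map_add_mul_add V hsym, trace_conjTranspose_map_add_mul_add V hsym,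
    map_add, conjTranspose_add, Matrix.add_mul, trace_add]
  ring

end StarRing

theorem Matrix.IsHermitian.re_trace_conjTranspose_mul_symm {m n : Type*} [Fintype m] [Fintype n]
    {M : Matrix m m ℂ} (hM : M.IsHermitian) (X U : Matrix m n ℂ) :
    (Mᴴ * (X * Uᴴ + U * Xᴴ)).trace.re = 2 * ((M * X)ᴴ * U).trace.re := by
  have hXU : X * Uᴴ = (U * Xᴴ)ᴴ := by rw [conjTranspose_mul, conjTranspose_conjTranspose]
  rw [hXU, Matrix.mul_add, trace_add, Complex.add_re, trace_conjTranspose_mul_mul_eq, hM.eq,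
    hM.trace_mul_conjTranspose, Complex.star_def, Complex.conj_re]
  ring

/-- Exact expansion of the Fock energy `E_f(X + U)` (core of Lemma 5.1):
with `D := XU* + UX*`,
`E_f(X+U) = E_f(X) + Re⟨V(XX*)X, U⟩ + (1/2)Re⟨V(XX*)U + V(D)X, U⟩
  + (1/2)Re⟨V(D)U, U⟩ + (1/4)Re⟨V(UU*), UU*⟩`. -/
theorem fockEnergy_expansion (n p : ℕ)
    (V : Matrix (Fin n) (Fin n) ℂ →ₗ[ℂ] Matrix (Fin n) (Fin n) ℂ)
    (hsym : ∀ D₁ D₂ : Matrix (Fin n) (Fin n) ℂ,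
      ((V D₁)ᴴ * D₂).trace = ((V D₂)ᴴ * D₁).trace)
    (hherm : ∀ D : Matrix (Fin n) (Fin n) ℂ, Dᴴ = D → (V D)ᴴ = V D)
    (X U : Matrix (Fin n) (Fin p) ℂ) :
    fockEnergy V (X + U)
      = fockEnergy V X
        + (((V (X * Xᴴ) * X)ᴴ * U).trace).re
        + (1 / 2) * (((V (X * Xᴴ) * U + V (X * Uᴴ + U * Xᴴ) * X)ᴴ * U).trace).re
        + (1 / 2) * (((V (X * Uᴴ + U * Xᴴ) * U)ᴴ * U).trace).re
        + (1 / 4) * (((V (U * Uᴴ))ᴴ * (U * Uᴴ)).trace).re := by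
  have hVP : (V (X * Xᴴ)).IsHermitian := hherm _ (isHermitian_mul_conjTranspose_self X)
  have hVD : (V (X * Uᴴ + U * Xᴴ)).IsHermitian := hherm _ (isHermitian_mul_conjTranspose_add X U)
  unfold fockEnergy
  rw [add_mul_conjTranspose_add, trace_conjTranspose_map_add_add_mul_add_add V hsym,
    ← trace_conjTranspose_mul_mul_eq (V (X * Xᴴ)) U U,
    ← trace_conjTranspose_mul_mul_eq (V (X * Uᴴ + U * Xᴴ)) U U]
  simp only [Complex.add_re, Complex.mul_re, Complex.re_ofNat, Complex.im_ofNat, zero_mul,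
    sub_zero, hVP.re_trace_conjTranspose_mul_symm, hVD.re_trace_conjTranspose_mul_symm,
    conjTranspose_add, Matrix.add_mul, trace_add]
  ring
end

section
/- (Gradient of the Fock energy; Lemma 5.1, first part.) Let V : ℂ^{n×n} → ℂ^{n×n} be an ℝ-continuous ℂ-linear map that is self-adjoint with respect to the Frobenius inner product (⟨V(D₁), D₂⟩ = ⟨V(D₂), D₁⟩ for all D₁, D₂) and Hermitian-preserving (D* = D implies (V(D))* = V(D)). Define E_f : ℂ^{n×p} → ℝ by E_f(Y) := (1/4) Re⟨V(YY*), YY*⟩, viewing ℂ^{n×p} as a real normed vector space. Then at every X ∈ ℂ^{n×p}, E_f is Fréchet differentiable with derivative U ↦ Re⟨V(XX*)X, U⟩; that is, the Euclidean gradient of E_f at X with respect to the real inner product (A,B) ↦ Re tr(A*B) is ∇E_f(X) = V(XX*)X. -/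
/-!
Write `E_f = ¼ q ∘ g` with `g(Y) = YY*` and `q(D) = Re⟨V D, D⟩`. The symmetry of `V` gives
`dq_D(H) = 2 Re⟨V D, H⟩`, and `dg_X(U) = UX* + XU*`. Since `W = V(XX*)` is Hermitian, both halves
of `Re⟨W, UX* + XU*⟩` equal `Re⟨WX, U⟩`, so the derivative is `¼ · 2 · 2 · Re⟨WX, U⟩`.
-/

open Matrix

attribute [local instance] Matrix.frobeniusNormedAddCommGroup Matrix.frobeniusNormedSpace

theorem ContinuousLinearMap.hasFDerivAt_apply_comp_self_of_symm {𝕜 E F G : Type*}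
    [NontriviallyNormedField 𝕜] [NormedAddCommGroup E] [NormedSpace 𝕜 E]
    [NormedAddCommGroup F] [NormedSpace 𝕜 F] [NormedAddCommGroup G] [NormedSpace 𝕜 G]
    (B : F →L[𝕜] E →L[𝕜] G) (T : E →L[𝕜] F) (hBT : ∀ x y, B (T x) y = B (T y) x) (x : E) :
    HasFDerivAt (fun y => B (T y) y) ((2 : 𝕜) • B (T x)) x := by
  refine (B.hasFDerivAt_of_bilinear T.hasFDerivAt (hasFDerivAt_id x)).congr_fderiv ?_
  ext y
  simp [hBT y x, two_smul]

namespace Matrix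

variable {𝕜 m n k : Type*} [RCLike 𝕜] [Fintype m] [Fintype n] [Fintype k]

noncomputable def reTraceInnerL : Matrix m n 𝕜 →L[ℝ] Matrix m n 𝕜 →L[ℝ] ℝ :=
  IsBilinearMap.toContinuousBilinearMap
    (f := fun A B : Matrix m n 𝕜 => RCLike.re (Aᴴ * B).trace)
    { add_left := fun A₁ A₂ B => by simp [Matrix.add_mul]
      smul_left := fun c A B => by simp [Matrix.smul_mul, RCLike.smul_re]
      add_right := fun A B₁ B₂ => by simp [Matrix.mul_add]
      smul_right := fun c A B => by simp [RCLike.smul_re] }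

@[simp]
theorem reTraceInnerL_apply (A B : Matrix m n 𝕜) :
    reTraceInnerL A B = RCLike.re (Aᴴ * B).trace := rfl

noncomputable def mulConjTransposeL : Matrix m n 𝕜 →L[ℝ] Matrix k n 𝕜 →L[ℝ] Matrix m k 𝕜 :=
  IsBilinearMap.toContinuousBilinearMap
    (f := fun (Y : Matrix m n 𝕜) (Z : Matrix k n 𝕜) => Y * Zᴴ)
    { add_left := fun Y₁ Y₂ Z => Matrix.add_mul _ _ _
      smul_left := fun c Y Z => Matrix.smul_mul _ _ _
      add_right := fun Y Z₁ Z₂ => by simp [Matrix.mul_add]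
      smul_right := fun c Y Z => by simp }

theorem reTraceInnerL_comm (A B : Matrix m n 𝕜) : reTraceInnerL A B = reTraceInnerL B A := by
  rw [reTraceInnerL_apply, reTraceInnerL_apply, ← RCLike.conj_re, starRingEnd_apply,
    ← trace_conjTranspose]
  simp [conjTranspose_mul]

theorem reTraceInnerL_mul_conjTranspose (W : Matrix k m 𝕜) (U : Matrix k n 𝕜)
    (X : Matrix m n 𝕜) : reTraceInnerL W (U * Xᴴ) = reTraceInnerL (W * X) U := by
  simp only [reTraceInnerL_apply, conjTranspose_mul, ← Matrix.mul_assoc]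
  rw [trace_mul_cycle]

theorem IsHermitian.reTraceInnerL_conjTranspose {W : Matrix m m 𝕜} (hW : W.IsHermitian)
    (H : Matrix m m 𝕜) : reTraceInnerL W Hᴴ = reTraceInnerL W H := by
  rw [reTraceInnerL_comm, reTraceInnerL_apply, reTraceInnerL_apply, conjTranspose_conjTranspose,
    trace_mul_comm, hW.eq]

theorem IsHermitian.reTraceInnerL_mul_conjTranspose_add {W : Matrix m m 𝕜} (hW : W.IsHermitian)
    (X U : Matrix m n 𝕜) :
    reTraceInnerL W (U * Xᴴ + X * Uᴴ) = 2 * reTraceInnerL (W * X) U := by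
  have hXU : X * Uᴴ = (U * Xᴴ)ᴴ := by rw [conjTranspose_mul, conjTranspose_conjTranspose]
  rw [map_add, hXU, hW.reTraceInnerL_conjTranspose, reTraceInnerL_mul_conjTranspose, two_mul]

theorem hasFDerivAt_mul_conjTranspose_self (X : Matrix m n 𝕜) :
    ∃ G : Matrix m n 𝕜 →L[ℝ] Matrix m m 𝕜, (∀ U, G U = U * Xᴴ + X * Uᴴ) ∧
      HasFDerivAt (fun Y : Matrix m n 𝕜 => Y * Yᴴ) G X :=
  ⟨_, fun U => add_comm (X * Uᴴ) (U * Xᴴ),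
    mulConjTransposeL.hasFDerivAt_of_bilinear (hasFDerivAt_id X) (hasFDerivAt_id X)⟩

-- `show` restates the goals because `simp` cannot match the Frobenius topology against the
-- product topology carried by the types of these continuous linear maps.
theorem hasFDerivAt_reTraceInnerL_apply_mul_conjTranspose_self
    (T : Matrix m m 𝕜 →L[ℝ] Matrix m m 𝕜)
    (hsymm : ∀ D₁ D₂, reTraceInnerL (T D₁) D₂ = reTraceInnerL (T D₂) D₁)
    (hherm : ∀ D : Matrix m m 𝕜, D.IsHermitian → (T D).IsHermitian) (X : Matrix m n 𝕜) :
    HasFDerivAt (fun Y : Matrix m n 𝕜 => reTraceInnerL (T (Y * Yᴴ)) (Y * Yᴴ))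
      ((4 : ℝ) • reTraceInnerL (T (X * Xᴴ) * X)) X := by
  obtain ⟨G, hG, hGX⟩ := hasFDerivAt_mul_conjTranspose_self X
  have hQ := reTraceInnerL.hasFDerivAt_apply_comp_self_of_symm T hsymm (X * Xᴴ)
  refine (hQ.comp X hGX).congr_fderiv ?_
  ext U
  have hW : (T (X * Xᴴ)).IsHermitian := hherm _ (isHermitian_mul_conjTranspose_self X)
  show 2 * reTraceInnerL (T (X * Xᴴ)) (G U) = 4 * reTraceInnerL (T (X * Xᴴ) * X) U
  rw [hG, hW.reTraceInnerL_mul_conjTranspose_add]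
  ring

end Matrix

theorem fockEnergy_hasFDerivAt_general (n p : ℕ)
    (V : Matrix (Fin n) (Fin n) ℂ →ₗ[ℂ] Matrix (Fin n) (Fin n) ℂ)
    (hsym : ∀ D₁ D₂ : Matrix (Fin n) (Fin n) ℂ,
      ((V D₁)ᴴ * D₂).trace = ((V D₂)ᴴ * D₁).trace)
    (hherm : ∀ D : Matrix (Fin n) (Fin n) ℂ, Dᴴ = D → (V D)ᴴ = V D)
    (X : Matrix (Fin n) (Fin p) ℂ) :
    ∃ f' : Matrix (Fin n) (Fin p) ℂ →L[ℝ] ℝ,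
      (∀ U : Matrix (Fin n) (Fin p) ℂ,
          f' U = (((V (X * Xᴴ) * X)ᴴ * U).trace).re)
        ∧ HasFDerivAt (fockEnergy V) f' X := by
  let T := (V.restrictScalars ℝ).toContinuousLinearMap
  have hT : ∀ D₁ D₂, reTraceInnerL (T D₁) D₂ = reTraceInnerL (T D₂) D₁ :=
    fun D₁ D₂ => congrArg Complex.re (hsym D₁ D₂)
  refine ⟨reTraceInnerL (V (X * Xᴴ) * X), fun U => rfl, ?_⟩
  refine ((hasFDerivAt_reTraceInnerL_apply_mul_conjTranspose_self T hT hherm X).const_mul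
    (1 / 4 : ℝ)).congr_fderiv ?_
  ext U
  show 1 / 4 * (4 * reTraceInnerL (V (X * Xᴴ) * X) U) = reTraceInnerL (V (X * Xᴴ) * X) U
  ring

/-- Gradient of the Fock energy (Lemma 5.1, first part): `E_f` is Fréchet
differentiable at every `X`, with (real) derivative `U ↦ Re⟨V(XX*)X, U⟩`,
i.e. Euclidean gradient `∇E_f(X) = V(XX*)X`. -/
theorem fockEnergy_hasFDerivAt (n p : ℕ)
    (V : Matrix (Fin n) (Fin n) ℂ →ₗ[ℂ] Matrix (Fin n) (Fin n) ℂ)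
    (hV : Continuous V)
    (hsym : ∀ D₁ D₂ : Matrix (Fin n) (Fin n) ℂ,
      ((V D₁)ᴴ * D₂).trace = ((V D₂)ᴴ * D₁).trace)
    (hherm : ∀ D : Matrix (Fin n) (Fin n) ℂ, Dᴴ = D → (V D)ᴴ = V D)
    (X : Matrix (Fin n) (Fin p) ℂ) :
    ∃ f' : Matrix (Fin n) (Fin p) ℂ →L[ℝ] ℝ,
      (∀ U : Matrix (Fin n) (Fin p) ℂ,
          f' U = (((V (X * Xᴴ) * X)ᴴ * U).trace).re)
        ∧ HasFDerivAt (fockEnergy V) f' X :=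
  fockEnergy_hasFDerivAt_general n p V hsym hherm X
end

section
/- (Hessian of the Fock energy along a direction; Lemma 5.1, second part.) Let V : ℂ^{n×n} → ℂ^{n×n} be ℂ-linear, self-adjoint with respect to the Frobenius inner product (⟨V(D₁), D₂⟩ = ⟨V(D₂), D₁⟩ for all D₁, D₂) and Hermitian-preserving (D* = D implies (V(D))* = V(D)). Define E_f(Y) := (1/4) Re⟨V(YY*), YY*⟩. Fix X, U ∈ ℂ^{n×p} and let g : ℝ → ℝ, g(t) := E_f(X + tU). Then g is a polynomial in t of degree at most 4, g'(0) = Re⟨V(XX*)X, U⟩, and g''(0) = Re⟨V(XX*)U + V(XU* + UX*)X, U⟩; i.e., the Euclidean Hessian of E_f at X applied to U is ∇²E_f(X)[U] = V(XX*)U + V(XU* + UX*)X. -/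
/-! Along the line `t ↦ X + tU` the Gram matrix is `A + tB + t²C` with `A = XX*`,
`B = XU* + UX*`, `C = UU*`, so `4 E_f(X + tU) = β(A + tB + t²C, A + tB + t²C)` for the real
bilinear form `β(D₁, D₂) = Re⟨V D₁, D₂⟩`, which is symmetric. Hence `g` is a quartic with
`g'(0) = β(A, B) / 2` and `g''(0) = β(A, C) + β(B, B) / 2`; since `V A` and `V B` are Hermitian,
cyclicity of the trace turns these into the stated inner products. -/

open Matrix

theorem LinearMap.BilinForm.IsSymm.apply_add_smul_add_sq_smul_self {R M : Type*} [CommRing R]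
    [AddCommGroup M] [Module R M] {β : LinearMap.BilinForm R M} (hβ : β.IsSymm)
    (a b c : M) (t : R) :
    β (a + t • b + t ^ 2 • c) (a + t • b + t ^ 2 • c)
      = β a a + 2 * β a b * t + (2 * β a c + β b b) * t ^ 2 + 2 * β b c * t ^ 3
        + β c c * t ^ 4 := by
  simp only [map_add, map_smul, LinearMap.add_apply, LinearMap.smul_apply, smul_eq_mul,
    hβ.eq b a, hβ.eq c a, hβ.eq c b]
  ring

theorem hasDerivAt_quartic (a₀ a₁ a₂ a₃ a₄ t : ℝ) :
    HasDerivAt (fun t : ℝ => a₀ + a₁ * t + a₂ * t ^ 2 + a₃ * t ^ 3 + a₄ * t ^ 4)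
      (a₁ + 2 * a₂ * t + 3 * a₃ * t ^ 2 + 4 * a₄ * t ^ 3) t := by
  have h := (((((hasDerivAt_id t).const_mul a₁).const_add a₀).add
    ((hasDerivAt_pow 2 t).const_mul a₂)).add ((hasDerivAt_pow 3 t).const_mul a₃)).add
      ((hasDerivAt_pow 4 t).const_mul a₄)
  exact h.congr_deriv (by norm_num; ring)

theorem deriv_quartic_zero (a₀ a₁ a₂ a₃ a₄ : ℝ) :
    deriv (fun t : ℝ => a₀ + a₁ * t + a₂ * t ^ 2 + a₃ * t ^ 3 + a₄ * t ^ 4) 0 = a₁ := by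
  simp [(hasDerivAt_quartic a₀ a₁ a₂ a₃ a₄ 0).deriv]

theorem deriv_deriv_quartic_zero (a₀ a₁ a₂ a₃ a₄ : ℝ) :
    deriv (deriv (fun t : ℝ => a₀ + a₁ * t + a₂ * t ^ 2 + a₃ * t ^ 3 + a₄ * t ^ 4)) 0
      = 2 * a₂ := by
  have h₁ := funext fun t => (hasDerivAt_quartic a₀ a₁ a₂ a₃ a₄ t).deriv
  have h₂ := hasDerivAt_quartic a₁ (2 * a₂) (3 * a₃) (4 * a₄) 0 0
  simp only [zero_mul, add_zero, mul_zero, ne_eq, OfNat.ofNat_ne_zero, not_false_eq_true,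
    zero_pow] at h₂
  rw [h₁, h₂.deriv]

theorem add_smul_mul_conjTranspose_add_smul {𝕜 m n : Type*} [RCLike 𝕜] [Fintype n]
    (X U : Matrix m n 𝕜) (t : ℝ) :
    (X + t • U) * (X + t • U)ᴴ = X * Xᴴ + t • (X * Uᴴ + U * Xᴴ) + t ^ 2 • (U * Uᴴ) := by
  simp only [conjTranspose_add, conjTranspose_smul, star_trivial, Matrix.add_mul, Matrix.mul_add,
    Matrix.smul_mul, Matrix.mul_smul, smul_add, smul_smul, sq]
  abel

theorem re_trace_conjTranspose_mul_add_mul_conjTranspose {𝕜 m n : Type*} [RCLike 𝕜]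
    [Fintype m] [Fintype n] {P : Matrix m m 𝕜} (hP : P.IsHermitian) (X U : Matrix m n 𝕜) :
    RCLike.re (Pᴴ * (X * Uᴴ + U * Xᴴ)).trace = 2 * RCLike.re ((P * X)ᴴ * U).trace := by
  have hUX : (P * (U * Xᴴ)).trace = ((P * X)ᴴ * U).trace := by
    rw [conjTranspose_mul, hP.eq, ← Matrix.mul_assoc, trace_mul_comm, Matrix.mul_assoc]
  have hXU : (P * (X * Uᴴ)).trace = star (P * (U * Xᴴ)).trace := by
    rw [← trace_conjTranspose, conjTranspose_mul, conjTranspose_mul, conjTranspose_conjTranspose,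
      hP.eq, trace_mul_comm, Matrix.mul_assoc]
  rw [hP.eq, Matrix.mul_add, trace_add, map_add, hXU, hUX, RCLike.star_def, RCLike.conj_re]
  ring

theorem trace_conjTranspose_mul_mul_conjTranspose_self {𝕜 m n : Type*} [RCLike 𝕜]
    [Fintype m] [Fintype n] (P : Matrix m m 𝕜) (U : Matrix m n 𝕜) :
    (Pᴴ * (U * Uᴴ)).trace = ((P * U)ᴴ * U).trace := by
  rw [conjTranspose_mul, ← Matrix.mul_assoc, trace_mul_comm, Matrix.mul_assoc]

noncomputable def fockForm {𝕜 m : Type*} [RCLike 𝕜] [Fintype m]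
    (V : Matrix m m 𝕜 →ₗ[𝕜] Matrix m m 𝕜) : LinearMap.BilinForm ℝ (Matrix m m 𝕜) :=
  LinearMap.mk₂ ℝ (fun D₁ D₂ => RCLike.re ((V D₁)ᴴ * D₂).trace)
    (fun _ _ _ => by simp [Matrix.add_mul])
    (fun _ _ _ => by simp [RCLike.smul_re])
    (fun _ _ _ => by simp [Matrix.mul_add])
    (fun _ _ _ => by simp [RCLike.smul_re])

theorem fockForm_apply {𝕜 m : Type*} [RCLike 𝕜] [Fintype m]
    (V : Matrix m m 𝕜 →ₗ[𝕜] Matrix m m 𝕜) (D₁ D₂ : Matrix m m 𝕜) :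
    fockForm V D₁ D₂ = RCLike.re ((V D₁)ᴴ * D₂).trace :=
  rfl

theorem fockEnergy_eq_fockForm {n p : ℕ}
    (V : Matrix (Fin n) (Fin n) ℂ →ₗ[ℂ] Matrix (Fin n) (Fin n) ℂ) (Y : Matrix (Fin n) (Fin p) ℂ) :
    fockEnergy V Y = (1 / 4) * fockForm V (Y * Yᴴ) (Y * Yᴴ) :=
  rfl

/-- Hessian of the Fock energy along a direction (Lemma 5.1, second part):
`g(t) = E_f(X + tU)` is a polynomial of degree at most 4 in `t`, with
`g'(0) = Re⟨V(XX*)X, U⟩` and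
`g''(0) = Re⟨V(XX*)U + V(XU* + UX*)X, U⟩`. -/
theorem fockEnergy_second_directional_derivative (n p : ℕ)
    (V : Matrix (Fin n) (Fin n) ℂ →ₗ[ℂ] Matrix (Fin n) (Fin n) ℂ)
    (hsym : ∀ D₁ D₂ : Matrix (Fin n) (Fin n) ℂ,
      ((V D₁)ᴴ * D₂).trace = ((V D₂)ᴴ * D₁).trace)
    (hherm : ∀ D : Matrix (Fin n) (Fin n) ℂ, Dᴴ = D → (V D)ᴴ = V D)
    (X U : Matrix (Fin n) (Fin p) ℂ) :
    (∃ a₀ a₁ a₂ a₃ a₄ : ℝ, ∀ t : ℝ,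
        fockEnergy V (X + t • U)
          = a₀ + a₁ * t + a₂ * t ^ 2 + a₃ * t ^ 3 + a₄ * t ^ 4)
      ∧ deriv (fun t : ℝ => fockEnergy V (X + t • U)) 0
          = (((V (X * Xᴴ) * X)ᴴ * U).trace).re
      ∧ deriv (deriv (fun t : ℝ => fockEnergy V (X + t • U))) 0
          = (((V (X * Xᴴ) * U + V (X * Uᴴ + U * Xᴴ) * X)ᴴ * U).trace).re := by
  set β := fockForm V
  set A := X * Xᴴ
  set B := X * Uᴴ + U * Xᴴ
  set C := U * Uᴴ
  have hβ : β.IsSymm := ⟨fun D₁ D₂ => congrArg RCLike.re (hsym D₁ D₂)⟩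
  have hVA : (V A).IsHermitian := hherm A (isHermitian_mul_conjTranspose_self X)
  have hVB : (V B).IsHermitian := hherm B (by simp [B, add_comm])
  have hquartic (t : ℝ) : fockEnergy V (X + t • U) = (1 / 4) * β A A + (1 / 2) * β A B * t
      + (1 / 4) * (2 * β A C + β B B) * t ^ 2 + (1 / 2) * β B C * t ^ 3
      + (1 / 4) * β C C * t ^ 4 := by
    rw [fockEnergy_eq_fockForm, add_smul_mul_conjTranspose_add_smul,
      hβ.apply_add_smul_add_sq_smul_self]
    ring
  rw [funext hquartic, deriv_quartic_zero, deriv_deriv_quartic_zero]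
  refine ⟨⟨_, _, _, _, _, hquartic⟩, ?_, ?_⟩
  · rw [fockForm_apply, re_trace_conjTranspose_mul_add_mul_conjTranspose hVA,
      RCLike.re_to_complex]
    ring
  · rw [fockForm_apply, fockForm_apply, trace_conjTranspose_mul_mul_conjTranspose_self,
      re_trace_conjTranspose_mul_add_mul_conjTranspose hVB, conjTranspose_add, Matrix.add_mul,
      trace_add, Complex.add_re, RCLike.re_to_complex, RCLike.re_to_complex]
    ring
end

section
/- Let E ∈ ℝ^{n×n} be symmetric with EX = 0, and let X, Z ∈ ℝ^{n×p} satisfy XᵀX = ZᵀZ = I_p. Then tr(E ZZᵀ) = tr(E (ZZᵀ − XXᵀ)²). (This is the key identity ⟨C − C^k, Z^k(Z^k)ᵀ⟩ = ⟨C − C^k, (Z^k(Z^k)ᵀ − X^k(X^k)ᵀ)²⟩ used in the proof of the global convergence theorem for the structured quasi-Newton method applied to the linear eigenvalue problem, valid because the approximation C^k agrees with C on X^k.) -/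
/-!
Put `P = ZZᵀ` and `Q = XXᵀ`. Since `EQ = 0` we have `E(P - Q) = EP`, and `P² = P` then gives
`E(P - Q)² = EP - EPQ`. Symmetry of `E` turns `EX = 0` into `XᵀE = 0`, so
`tr(EPQ) = tr(XᵀEPX) = 0`.
-/

open Matrix

theorem mul_sub_mul_self_eq_mul_sub_mul_mul {R : Type*} [NonUnitalRing R] {e p q : R}
    (hp : IsIdempotentElem p) (heq : e * q = 0) :
    e * ((p - q) * (p - q)) = e * p - e * p * q := by
  have hep : e * (p - q) = e * p := by rw [mul_sub, heq, sub_zero]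
  rw [← mul_assoc, hep, mul_sub, mul_assoc, hp.eq]

theorem Matrix.isIdempotentElem_mul_transpose {m n R : Type*} [Fintype m] [Fintype n]
    [DecidableEq n] [CommSemiring R] {Z : Matrix m n R} (hZ : Zᵀ * Z = 1) :
    IsIdempotentElem (Z * Zᵀ) := by
  rw [IsIdempotentElem, Matrix.mul_assoc, ← Matrix.mul_assoc Zᵀ, hZ, Matrix.one_mul]

theorem Matrix.trace_mul_mul_transpose_eq_zero {m n R : Type*} [Fintype m] [Fintype n]
    [CommSemiring R] {E : Matrix m m R} {X : Matrix m n R} (hXE : Xᵀ * E = 0)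
    (A : Matrix m m R) : (E * A * (X * Xᵀ)).trace = 0 := by
  rw [← Matrix.mul_assoc, trace_mul_comm, ← Matrix.mul_assoc, ← Matrix.mul_assoc, hXE,
    Matrix.zero_mul, Matrix.zero_mul, trace_zero]

theorem trace_key_identity_general (n p : ℕ)
    (E : Matrix (Fin n) (Fin n) ℝ) (hE : Eᵀ = E)
    (X Z : Matrix (Fin n) (Fin p) ℝ)
    (hEX : E * X = 0) (hZ : Zᵀ * Z = 1) :
    (E * (Z * Zᵀ)).trace
      = (E * ((Z * Zᵀ - X * Xᵀ) * (Z * Zᵀ - X * Xᵀ))).trace := by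
  have hXE : Xᵀ * E = 0 := by rw [← hE, ← transpose_mul, hEX, transpose_zero]
  rw [mul_sub_mul_self_eq_mul_sub_mul_mul (isIdempotentElem_mul_transpose hZ)
      (by rw [← Matrix.mul_assoc, hEX, Matrix.zero_mul]),
    trace_sub, trace_mul_mul_transpose_eq_zero hXE, sub_zero]

/-- If `E` is symmetric with `EX = 0` and `X, Z` have orthonormal columns, then
`tr(E ZZᵀ) = tr(E (ZZᵀ − XXᵀ)²)`. -/
theorem trace_key_identity (n p : ℕ)
    (E : Matrix (Fin n) (Fin n) ℝ) (hE : Eᵀ = E)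
    (X Z : Matrix (Fin n) (Fin p) ℝ)
    (hEX : E * X = 0) (hX : Xᵀ * X = 1) (hZ : Zᵀ * Z = 1) :
    (E * (Z * Zᵀ)).trace
      = (E * ((Z * Zᵀ - X * Xᵀ) * (Z * Zᵀ - X * Xᵀ))).trace :=
  trace_key_identity_general n p E hE X Z hEX hZ
end

section
/- (The regularized subproblem is a linear eigenvalue problem.) Let X, X^k ∈ ℝ^{n×p} satisfy XᵀX = (X^k)ᵀX^k = I_p, let C^k ∈ ℝ^{n×n}, and let τ ∈ ℝ. Then (1/2)tr(XᵀC^kX) + (τ/4)‖XXᵀ − X^k(X^k)ᵀ‖_F² = (1/2)tr(Xᵀ(C^k − τX^k(X^k)ᵀ)X) + τp/2. Hence minimizing the regularized model over the Stiefel manifold is equivalent to minimizing (1/2)tr(Xᵀ(C^k − τX^k(X^k)ᵀ)X) over XᵀX = I_p, i.e., to computing the p smallest eigenvalues of the shifted matrix C^k − τX^k(X^k)ᵀ. -/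
/-!
`XXᵀ` and `X^k(X^k)ᵀ` are orthogonal projections of rank `p`, so
`d_p(X, X^k) = tr(XXᵀ) + tr(X^k(X^k)ᵀ) − 2 tr(XXᵀX^k(X^k)ᵀ) = 2p − 2 tr(Xᵀ X^k(X^k)ᵀ X)`,
the last step by cyclicity of the trace. The quadratic penalty is therefore linear in
`XXᵀ`, and it folds into the shift `−τ X^k(X^k)ᵀ` of `C^k`.
-/

namespace Matrix

variable {m n R : Type*} [Fintype m] [Fintype n] [CommRing R]

theorem trace_transpose_mul_sub_sub (A B : Matrix m n R) :
    ((A - B)ᵀ * (A - B)).trace = (Aᵀ * A).trace + (Bᵀ * B).trace - 2 * (Aᵀ * B).trace := by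
  have hBA : (Bᵀ * A).trace = (Aᵀ * B).trace := by
    rw [← trace_transpose, transpose_mul, transpose_transpose]
  simp only [transpose_sub, Matrix.sub_mul, Matrix.mul_sub, trace_sub, hBA]
  ring

variable [DecidableEq n]

theorem isIdempotentElem_mul_transpose_of_transpose_mul_self_eq_one {X : Matrix m n R}
    (hX : Xᵀ * X = 1) : IsIdempotentElem (X * Xᵀ) := by
  rw [IsIdempotentElem, Matrix.mul_assoc, ← Matrix.mul_assoc Xᵀ, hX, Matrix.one_mul]

theorem trace_mul_transpose_of_transpose_mul_self_eq_one {X : Matrix m n R}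
    (hX : Xᵀ * X = 1) : (X * Xᵀ).trace = Fintype.card n := by
  rw [trace_mul_comm, hX, trace_one]

theorem trace_projDist_of_transpose_mul_self_eq_one {X Y : Matrix m n R}
    (hX : Xᵀ * X = 1) (hY : Yᵀ * Y = 1) :
    ((X * Xᵀ - Y * Yᵀ)ᵀ * (X * Xᵀ - Y * Yᵀ)).trace
      = 2 * Fintype.card n - 2 * (Xᵀ * (Y * Yᵀ) * X).trace := by
  have hcross : (X * Xᵀ * (Y * Yᵀ)).trace = (Xᵀ * (Y * Yᵀ) * X).trace := by
    rw [Matrix.mul_assoc, trace_mul_comm]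
  simp only [trace_transpose_mul_sub_sub, transpose_mul, transpose_transpose, hcross,
    (isIdempotentElem_mul_transpose_of_transpose_mul_self_eq_one hX).eq,
    (isIdempotentElem_mul_transpose_of_transpose_mul_self_eq_one hY).eq,
    trace_mul_transpose_of_transpose_mul_self_eq_one hX,
    trace_mul_transpose_of_transpose_mul_self_eq_one hY]
  ring

end Matrix

open Matrix

/-- The regularized subproblem is a linear eigenvalue problem: on the Stiefel
manifold, `(1/2)tr(XᵀC^kX) + (τ/4)‖XXᵀ − X^k(X^k)ᵀ‖_F²
  = (1/2)tr(Xᵀ(C^k − τX^k(X^k)ᵀ)X) + τp/2`. -/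
theorem model_is_shifted_eigenproblem (n p : ℕ)
    (Ck : Matrix (Fin n) (Fin n) ℝ) (τ : ℝ)
    (X Xk : Matrix (Fin n) (Fin p) ℝ)
    (hX : Xᵀ * X = 1) (hXk : Xkᵀ * Xk = 1) :
    (1 / 2) * (Xᵀ * Ck * X).trace
        + (τ / 4) * ((X * Xᵀ - Xk * Xkᵀ)ᵀ * (X * Xᵀ - Xk * Xkᵀ)).trace
      = (1 / 2) * (Xᵀ * (Ck - τ • (Xk * Xkᵀ)) * X).trace + τ * p / 2 := by
  rw [trace_projDist_of_transpose_mul_self_eq_one hX hXk, Fintype.card_fin, Matrix.mul_sub,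
    Matrix.sub_mul, trace_sub, Matrix.mul_smul, Matrix.smul_mul, trace_smul, smul_eq_mul]
  ring
end
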